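/- Let ρ be an n×n density matrix with eigenvalues 0 ≤ λ₁ ≤ λ₂ ≤ ⋯ ≤ λ_n, let A, B be n×n self-adjoint complex matrices, and let q ∈ ℝ with |q| > 1. Then (q²·(|q|λ_n + λ₁)²)·|Tr[ρ[A₀,B₀]_{1/|q|}]|² = (|q|λ_n + λ₁)²·|Tr[ρ[B₀,A₀]_{|q|}]|², and this common value is ≤ (1+|q|)²·(|q|λ_n − λ₁)²·V_ρ(A)·V_ρ(B). -/

import Mathlib

/-!
Write `Q = |q|`, `μ` for the eigenvalues of `ρ`, and `a`, `b` for `A₀`, `B₀` in an eigenbasis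
of `ρ`. The identity holds because `[A₀, B₀]_{1/Q} = -Q⁻¹ [B₀, A₀]_Q`. For the bound,
`Tr[ρ [B₀, A₀]_Q] = ∑ᵢⱼ (μⱼ - Q μᵢ) aᵢⱼ bⱼᵢ`, and for eigenvalues in `[λ₁, λₙ]` the scalar
inequality `|μⱼ - Q μᵢ| (Q λₙ + λ₁) ≤ (Q λₙ - λ₁) (μⱼ + Q μᵢ)` holds. Since `|aᵢⱼ| |bᵢⱼ|` is
symmetric in `i, j`, this bounds `(Q λₙ + λ₁) |Tr[ρ [B₀, A₀]_Q]|` by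
`(1 + Q) (Q λₙ - λ₁) ∑ᵢⱼ μᵢ |aᵢⱼ| |bᵢⱼ|`, and Cauchy–Schwarz with weights `μᵢ` bounds the square
of this sum by `V_ρ(A) V_ρ(B)`, because `V_ρ(A) = ∑ᵢⱼ μᵢ |aᵢⱼ|²`.
-/

open Matrix ComplexOrder

/-- `A₀ = A - Tr[ρA]·I`, the centered operator. -/
noncomputable def shift {n : ℕ} (ρ A : Matrix (Fin n) (Fin n) ℂ) : Matrix (Fin n) (Fin n) ℂ :=
  A - (ρ * A).trace • (1 : Matrix (Fin n) (Fin n) ℂ)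

/-- `V_ρ(A) = Tr[ρA²] - (Tr[ρA])²` (a real number for self-adjoint `A` and density `ρ`). -/
noncomputable def variance {n : ℕ} (ρ A : Matrix (Fin n) (Fin n) ℂ) : ℝ :=
  ((ρ * (A * A)).trace - ((ρ * A).trace) ^ 2).re

/-- the q-commutator `[A,B]_q = AB - q·BA`. -/
noncomputable def qComm {n : ℕ} (q : ℝ) (A B : Matrix (Fin n) (Fin n) ℂ) :
    Matrix (Fin n) (Fin n) ℂ :=
  A * B - (q : ℂ) • (B * A)

/-- the q-anti-commutator `{A,B}_q = AB + q·BA`. -/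
noncomputable def qAnti {n : ℕ} (q : ℝ) (A B : Matrix (Fin n) (Fin n) ℂ) :
    Matrix (Fin n) (Fin n) ℂ :=
  A * B + (q : ℂ) • (B * A)

/-- `lam` lists the eigenvalues of `ρ` (with multiplicity) in increasing order. -/
def IsOrderedEigenvalues {n : ℕ} {ρ : Matrix (Fin n) (Fin n) ℂ}
    (hρ : ρ.IsHermitian) (lam : Fin n → ℝ) : Prop :=
  Monotone lam ∧ ∃ σ : Equiv.Perm (Fin n), ∀ i, lam i = hρ.eigenvalues (σ i)

open Unitary

namespace Matrix.IsHermitian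

variable {ι : Type*} [Fintype ι] [DecidableEq ι] {ρ : Matrix ι ι ℂ} (hρ : ρ.IsHermitian)

noncomputable def toEigenbasis : Matrix ι ι ℂ ≃⋆ₐ[ℂ] Matrix ι ι ℂ :=
  conjStarAlgAut ℂ _ (star hρ.eigenvectorUnitary)

lemma toEigenbasis_self :
    hρ.toEigenbasis ρ = diagonal (fun i ↦ (hρ.eigenvalues i : ℂ)) :=
  hρ.conjStarAlgAut_star_eigenvectorUnitary

lemma trace_toEigenbasis (M : Matrix ι ι ℂ) : (hρ.toEigenbasis M).trace = M.trace := by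
  rw [toEigenbasis, conjStarAlgAut_apply, trace_mul_cycle, coe_star_mul_self, one_mul]

lemma isHermitian_toEigenbasis {M : Matrix ι ι ℂ} (hM : M.IsHermitian) :
    (hρ.toEigenbasis M).IsHermitian :=
  (hM.isSelfAdjoint.map hρ.toEigenbasis).isHermitian

lemma trace_mul_eq_sum (M : Matrix ι ι ℂ) :
    (ρ * M).trace = ∑ i, (hρ.eigenvalues i : ℂ) * hρ.toEigenbasis M i i := by
  rw [← hρ.trace_toEigenbasis, map_mul, toEigenbasis_self]
  simp [trace, diagonal_mul]

lemma trace_mul_mul_eq_sum (X Y : Matrix ι ι ℂ) :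
    (ρ * (X * Y)).trace = ∑ i, ∑ j,
      (hρ.eigenvalues i : ℂ) * (hρ.toEigenbasis X i j * hρ.toEigenbasis Y j i) := by
  rw [hρ.trace_mul_eq_sum, map_mul]
  simp only [mul_apply, Finset.mul_sum]

lemma re_trace_mul_mul_self_eq_sum {X : Matrix ι ι ℂ} (hX : X.IsHermitian) :
    (ρ * (X * X)).trace.re = ∑ i, ∑ j, hρ.eigenvalues i * ‖hρ.toEigenbasis X i j‖ ^ 2 := by
  have hX' := hρ.isHermitian_toEigenbasis hX
  rw [hρ.trace_mul_mul_eq_sum, Complex.re_sum]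
  refine Finset.sum_congr rfl fun i _ ↦ ?_
  rw [Complex.re_sum]
  refine Finset.sum_congr rfl fun j _ ↦ ?_
  rw [← hX'.apply j i, Complex.star_def, Complex.mul_conj, ← Complex.ofReal_mul,
    Complex.ofReal_re, Complex.normSq_eq_norm_sq]

end Matrix.IsHermitian

lemma Matrix.IsHermitian.star_trace_mul {ι : Type*} [Fintype ι] {ρ A : Matrix ι ι ℂ}
    (hρ : ρ.IsHermitian) (hA : A.IsHermitian) : star (ρ * A).trace = (ρ * A).trace := by
  rw [← trace_conjTranspose, conjTranspose_mul, hA.eq, hρ.eq, trace_mul_comm]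

section Centered

variable {n : ℕ} {ρ : Matrix (Fin n) (Fin n) ℂ}

lemma isHermitian_shift (hρ : ρ.IsHermitian) {A : Matrix (Fin n) (Fin n) ℂ}
    (hA : A.IsHermitian) : (shift ρ A).IsHermitian := by
  simp [IsHermitian, shift, conjTranspose_sub, hA.eq, hρ.star_trace_mul hA]

lemma variance_eq_re_trace_mul_shift (htr : ρ.trace = 1) (A : Matrix (Fin n) (Fin n) ℂ) :
    variance ρ A = (ρ * (shift ρ A * shift ρ A)).trace.re := by
  simp only [variance, shift, sub_mul, mul_sub, Matrix.smul_mul, Matrix.mul_smul, Matrix.one_mul,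
    Matrix.mul_one, trace_sub, trace_smul, smul_eq_mul, htr]
  ring_nf

lemma variance_eq_sum (hρ : ρ.IsHermitian) (htr : ρ.trace = 1) {A : Matrix (Fin n) (Fin n) ℂ}
    (hA : A.IsHermitian) :
    variance ρ A = ∑ i, ∑ j, hρ.eigenvalues i * ‖hρ.toEigenbasis (shift ρ A) i j‖ ^ 2 := by
  rw [variance_eq_re_trace_mul_shift htr, hρ.re_trace_mul_mul_self_eq_sum (isHermitian_shift hρ hA)]

lemma qComm_one_div {Q : ℝ} (hQ : Q ≠ 0) (X Y : Matrix (Fin n) (Fin n) ℂ) :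
    qComm (1 / Q) X Y = -(Q : ℂ)⁻¹ • qComm Q Y X := by
  have hQ' : (Q : ℂ) ≠ 0 := Complex.ofReal_ne_zero.mpr hQ
  simp only [qComm]
  push_cast
  match_scalars <;> field_simp

lemma trace_mul_qComm_eq_sum (hρ : ρ.IsHermitian) (Q : ℝ) (X Y : Matrix (Fin n) (Fin n) ℂ) :
    (ρ * qComm Q Y X).trace = ∑ i, ∑ j, ((hρ.eigenvalues j : ℂ) - Q * hρ.eigenvalues i) *
      (hρ.toEigenbasis X i j * hρ.toEigenbasis Y j i) := by
  rw [qComm, mul_sub, Matrix.mul_smul, trace_sub, trace_smul, hρ.trace_mul_mul_eq_sum,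
    hρ.trace_mul_mul_eq_sum, Finset.sum_comm, smul_eq_mul, Finset.mul_sum, ← Finset.sum_sub_distrib]
  refine Finset.sum_congr rfl fun i _ ↦ ?_
  rw [Finset.mul_sum, ← Finset.sum_sub_distrib]
  exact Finset.sum_congr rfl fun j _ ↦ by ring

end Centered

lemma abs_sub_mul_mul_le_of_mem_Icc {Q c₁ cₙ x y : ℝ} (hQ : 1 ≤ Q) (hc : 0 ≤ c₁)
    (hx : x ∈ Set.Icc c₁ cₙ) (hy : y ∈ Set.Icc c₁ cₙ) :
    |y - Q * x| * (Q * cₙ + c₁) ≤ (Q * cₙ - c₁) * (y + Q * x) := by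
  obtain ⟨hx₁, hxₙ⟩ := hx
  obtain ⟨hy₁, hyₙ⟩ := hy
  have hx₀ : 0 ≤ x := hc.trans hx₁
  have hy₀ : 0 ≤ y := hc.trans hy₁
  have hcₙ : 0 ≤ cₙ := hx₀.trans hxₙ
  have hQ₀ : 0 ≤ Q := zero_le_one.trans hQ
  have hQ₂ : 1 ≤ Q ^ 2 := by nlinarith
  rcases abs_cases (y - Q * x) with ⟨h, _⟩ | ⟨h, _⟩ <;> rw [h]
  · nlinarith [mul_le_mul_of_nonneg_left hyₙ hc, mul_le_mul_of_nonneg_right hx₁ hcₙ,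
      mul_nonneg hx₀ hcₙ]
  · have hcross : c₁ * x ≤ cₙ * y := by
      nlinarith [mul_le_mul_of_nonneg_right hy₁ hx₀, mul_le_mul_of_nonneg_left hxₙ hy₀]
    nlinarith [mul_le_mul_of_nonneg_left hcross hQ₀]

section Sums

variable {ι : Type*} [Fintype ι]

lemma sum_abs_sub_mul_mul_le {Q c₁ cₙ : ℝ} {μ : ι → ℝ} {w : ι → ι → ℝ} (hQ : 1 ≤ Q)
    (hc : 0 ≤ c₁) (hμ : ∀ i, μ i ∈ Set.Icc c₁ cₙ) (hw : ∀ i j, 0 ≤ w i j)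
    (hw_symm : ∀ i j, w j i = w i j) :
    (∑ i, ∑ j, |μ j - Q * μ i| * w i j) * (Q * cₙ + c₁) ≤
      (1 + Q) * (Q * cₙ - c₁) * ∑ i, ∑ j, μ i * w i j := by
  have hswap : ∑ i, ∑ j, μ j * w i j = ∑ i, ∑ j, μ i * w i j := by
    rw [Finset.sum_comm]
    simp only [hw_symm]
  calc (∑ i, ∑ j, |μ j - Q * μ i| * w i j) * (Q * cₙ + c₁)
      = ∑ i, ∑ j, |μ j - Q * μ i| * (Q * cₙ + c₁) * w i j := by
        simp only [Finset.sum_mul]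
        exact Finset.sum_congr rfl fun i _ ↦ Finset.sum_congr rfl fun j _ ↦ by ring
    _ ≤ ∑ i, ∑ j, (Q * cₙ - c₁) * (μ j + Q * μ i) * w i j := by
        refine Finset.sum_le_sum fun i _ ↦ Finset.sum_le_sum fun j _ ↦ ?_
        exact mul_le_mul_of_nonneg_right (abs_sub_mul_mul_le_of_mem_Icc hQ hc (hμ i) (hμ j))
          (hw i j)
    _ = (Q * cₙ - c₁) * (∑ i, ∑ j, μ j * w i j + Q * ∑ i, ∑ j, μ i * w i j) := by
        simp only [Finset.mul_sum, ← Finset.sum_add_distrib]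
        exact Finset.sum_congr rfl fun i _ ↦ Finset.sum_congr rfl fun j _ ↦ by ring
    _ = (1 + Q) * (Q * cₙ - c₁) * ∑ i, ∑ j, μ i * w i j := by
        rw [hswap]; ring

lemma sq_sum_mul_mul_le {κ : Type*} (s : Finset κ) {w : κ → ℝ} (hw : ∀ k ∈ s, 0 ≤ w k)
    (a b : κ → ℝ) :
    (∑ k ∈ s, w k * (a k * b k)) ^ 2 ≤ (∑ k ∈ s, w k * a k ^ 2) * ∑ k ∈ s, w k * b k ^ 2 :=
  Finset.sum_sq_le_sum_mul_sum_of_sq_le_mul s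
    (fun k hk ↦ mul_nonneg (hw k hk) (sq_nonneg _)) (fun k hk ↦ mul_nonneg (hw k hk) (sq_nonneg _))
    (fun k _ ↦ le_of_eq (by ring))

lemma norm_sum_sum_mul_le {a b : Matrix ι ι ℂ} (hb : b.IsHermitian) (c : ι → ι → ℝ) :
    ‖∑ i, ∑ j, (c i j : ℂ) * (a i j * b j i)‖ ≤ ∑ i, ∑ j, |c i j| * (‖a i j‖ * ‖b i j‖) := by
  refine (norm_sum_le _ _).trans (Finset.sum_le_sum fun i _ ↦ ?_)
  refine (norm_sum_le _ _).trans (Finset.sum_le_sum fun j _ ↦ le_of_eq ?_)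
  rw [norm_mul, norm_mul, Complex.norm_real, Real.norm_eq_abs, ← hb.apply i j, norm_star]

end Sums

lemma IsOrderedEigenvalues.eigenvalues_mem_Icc {n : ℕ} {ρ : Matrix (Fin (n + 1)) (Fin (n + 1)) ℂ}
    {hρ : ρ.IsHermitian} {lam : Fin (n + 1) → ℝ} (h : IsOrderedEigenvalues hρ lam)
    (i : Fin (n + 1)) : hρ.eigenvalues i ∈ Set.Icc (lam 0) (lam (Fin.last n)) := by
  obtain ⟨hmono, σ, hσ⟩ := h
  have hi : lam (σ.symm i) = hρ.eigenvalues i := by rw [hσ, Equiv.apply_symm_apply]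
  exact hi ▸ ⟨hmono (Fin.zero_le _), hmono (Fin.le_last _)⟩

theorem sq_mul_sq_norm_trace_mul_qComm_shift_le {n : ℕ} [NeZero n]
    {ρ A B : Matrix (Fin n) (Fin n) ℂ} (hρ : ρ.IsHermitian) (htr : ρ.trace = 1)
    (hA : A.IsHermitian) (hB : B.IsHermitian) {Q c₁ cₙ : ℝ} (hQ : 1 ≤ Q) (hc : 0 ≤ c₁)
    (hμ : ∀ i, hρ.eigenvalues i ∈ Set.Icc c₁ cₙ) :
    (Q * cₙ + c₁) ^ 2 * ‖(ρ * qComm Q (shift ρ B) (shift ρ A)).trace‖ ^ 2 ≤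
      (1 + Q) ^ 2 * (Q * cₙ - c₁) ^ 2 * variance ρ A * variance ρ B := by
  set μ := hρ.eigenvalues
  set a := hρ.toEigenbasis (shift ρ A)
  set b := hρ.toEigenbasis (shift ρ B)
  set S := ∑ i, ∑ j, μ i * (‖a i j‖ * ‖b i j‖)
  have ha : a.IsHermitian := hρ.isHermitian_toEigenbasis (isHermitian_shift hρ hA)
  have hb : b.IsHermitian := hρ.isHermitian_toEigenbasis (isHermitian_shift hρ hB)
  have hsum_pos : 0 ≤ Q * cₙ + c₁ := by
    have := hc.trans ((hμ 0).1.trans (hμ 0).2)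
    positivity
  have htriangle : ‖(ρ * qComm Q (shift ρ B) (shift ρ A)).trace‖ ≤
      ∑ i, ∑ j, |μ j - Q * μ i| * (‖a i j‖ * ‖b i j‖) := by
    rw [trace_mul_qComm_eq_sum hρ]
    exact_mod_cast norm_sum_sum_mul_le hb (fun i j ↦ μ j - Q * μ i)
  have hbound : ‖(ρ * qComm Q (shift ρ B) (shift ρ A)).trace‖ * (Q * cₙ + c₁) ≤
      (1 + Q) * (Q * cₙ - c₁) * S :=
    (mul_le_mul_of_nonneg_right htriangle hsum_pos).trans <|
      sum_abs_sub_mul_mul_le hQ hc hμ (fun _ _ ↦ by positivity) fun i j ↦ by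
        rw [← ha.apply i j, ← hb.apply i j, norm_star, norm_star]
  have hCS : S ^ 2 ≤ variance ρ A * variance ρ B := by
    rw [variance_eq_sum hρ htr hA, variance_eq_sum hρ htr hB]
    simpa only [Fintype.sum_prod_type] using
      sq_sum_mul_mul_le Finset.univ (w := fun k : Fin n × Fin n ↦ μ k.1)
        (fun k _ ↦ hc.trans (hμ k.1).1) (fun k ↦ ‖a k.1 k.2‖) (fun k ↦ ‖b k.1 k.2‖)
  calc (Q * cₙ + c₁) ^ 2 * ‖(ρ * qComm Q (shift ρ B) (shift ρ A)).trace‖ ^ 2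
      = (‖(ρ * qComm Q (shift ρ B) (shift ρ A)).trace‖ * (Q * cₙ + c₁)) ^ 2 := by ring
    _ ≤ ((1 + Q) * (Q * cₙ - c₁) * S) ^ 2 := by gcongr
    _ = (1 + Q) ^ 2 * (Q * cₙ - c₁) ^ 2 * S ^ 2 := by ring
    _ ≤ (1 + Q) ^ 2 * (Q * cₙ - c₁) ^ 2 * variance ρ A * variance ρ B := by
        rw [mul_assoc _ (variance ρ A)]
        gcongr

/-- Refined q-commutator uncertainty relation, case `|q| > 1`, with the identity
`q²·(|q|λₙ + λ₁)²·|Tr[ρ[A₀,B₀]_{1/|q|}]|² = (|q|λₙ + λ₁)²·|Tr[ρ[B₀,A₀]_{|q|}]|²`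
and the bound `≤ (1+|q|)²·(|q|λₙ − λ₁)²·V_ρ(A)·V_ρ(B)`. -/
theorem refined_qcommutator_uncertainty_of_one_lt_abs' {n : ℕ}
    (ρ A B : Matrix (Fin (n + 1)) (Fin (n + 1)) ℂ)
    (hρ : ρ.PosSemidef) (htr : ρ.trace = 1)
    (hA : A.IsHermitian) (hB : B.IsHermitian)
    (lam : Fin (n + 1) → ℝ) (hlam : IsOrderedEigenvalues hρ.1 lam)
    (hlam0 : 0 ≤ lam 0) (q : ℝ) (hq : 1 < |q|) :
    q ^ 2 * (|q| * lam (Fin.last n) + lam 0) ^ 2 *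
        ‖(ρ * qComm (1 / |q|) (shift ρ A) (shift ρ B)).trace‖ ^ 2 =
      (|q| * lam (Fin.last n) + lam 0) ^ 2 *
        ‖(ρ * qComm |q| (shift ρ B) (shift ρ A)).trace‖ ^ 2 ∧
    (|q| * lam (Fin.last n) + lam 0) ^ 2 *
        ‖(ρ * qComm |q| (shift ρ B) (shift ρ A)).trace‖ ^ 2 ≤
      (1 + |q|) ^ 2 * (|q| * lam (Fin.last n) - lam 0) ^ 2 *
        variance ρ A * variance ρ B := by
  have hq₀ : 0 < |q| := one_pos.trans hq
  have hswap : ‖(ρ * qComm (1 / |q|) (shift ρ A) (shift ρ B)).trace‖ =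
      |q|⁻¹ * ‖(ρ * qComm |q| (shift ρ B) (shift ρ A)).trace‖ := by
    rw [qComm_one_div hq₀.ne', Matrix.mul_smul, trace_smul, smul_eq_mul, norm_mul, norm_neg,
      norm_inv, Complex.norm_real, Real.norm_of_nonneg hq₀.le]
  refine ⟨?_, sq_mul_sq_norm_trace_mul_qComm_shift_le hρ.1 htr hA hB hq.le hlam0
    hlam.eigenvalues_mem_Icc⟩
  rw [hswap, mul_pow, ← sq_abs q]
  field_simp
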